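/- arXiv:2206.10962 — 2 statements merged into one kernel-verified Lean document; each statement's English description precedes it below -/
import Mathlib

section
/- Let (X, d) be a metric space and for each i ∈ ℕ let F_i = {X; f_{1,i}, …, f_{n_i,i}} be a function system whose maps f_{r,i} : X → X are φ_{r,i}-contractions for comparison functions φ_{r,i}, and let φ_i = max_{r=1,…,n_i} φ_{r,i} be the comparison function of the induced set map F_i(A) = ⋃_{r=1}^{n_i} f_{r,i}(A) on (H(X), h). If for every t > 0 the compositions φ₁∘φ₂∘⋯∘φ_k(t) tend to 0 as k → ∞, then for all A, B ∈ H(X) both the forward SFS trajectories and the backward SFS trajectories are asymptotically similar: h(Φ_k(A), Φ_k(B)) → 0 and h(Ψ_k(A), Ψ_k(B)) → 0 as k → ∞, where Φ_k = F_k∘F_{k−1}∘⋯∘F₁ and Ψ_k = F₁∘F₂∘⋯∘F_k (with the φ_i composed in the order matching the trajectory for the forward case). -/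
open Filter Set Topology

/-- Backward composition: `bwdComp g k = g 0 ∘ g 1 ∘ ⋯ ∘ g (k-1)`
(i.e. `g₁ ∘ g₂ ∘ ⋯ ∘ g_k` in 1-based notation). -/
def bwdComp {α : Type*} (g : ℕ → α → α) : ℕ → α → α
  | 0 => id
  | k + 1 => fun a => bwdComp g k (g k a)

/-- Forward composition: `fwdComp g k = g (k-1) ∘ ⋯ ∘ g 1 ∘ g 0`
(i.e. `g_k ∘ g_{k-1} ∘ ⋯ ∘ g₁` in 1-based notation). -/
def fwdComp {α : Type*} (g : ℕ → α → α) : ℕ → α → α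
  | 0 => id
  | k + 1 => fun a => g k (fwdComp g k a)

/-!
A comparison function `φ` satisfies `φ t ≤ t`, so every map of the systems is `1`-Lipschitz and
the set maps `F i` send nonempty compact sets to nonempty compact sets. Using nearest points in
compact sets, `h(F i A, F i B) ≤ φmax i (h(A, B))`. Iterating this along a trajectory bounds
`h(Φ_k A, Φ_k B)` (resp. `h(Ψ_k A, Ψ_k B)`) by the corresponding composition of the `φmax i`
evaluated at `h(A, B) ≤ h(A, B) + 1`, and these compositions tend to `0`.
-/

open Metric

theorem le_self_of_tendsto_iterate {φ : ℝ → ℝ} (hmono : MonotoneOn φ (Ici 0)) {t : ℝ}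
    (ht : 0 ≤ t) (hiter : Tendsto (fun p => φ^[p] t) atTop (𝓝 0)) : φ t ≤ t := by
  by_contra! hlt
  have hgrow : ∀ p, φ t ≤ φ^[p + 1] t := by
    intro p
    induction p with
    | zero => rfl
    | succ p ih =>
      rw [Function.iterate_succ_apply']
      exact hmono ht (ht.trans (hlt.le.trans ih)) (hlt.le.trans ih)
  have hlim : φ t ≤ 0 :=
    ge_of_tendsto ((tendsto_add_atTop_iff_nat 1).2 hiter) (Eventually.of_forall hgrow)
  linarith

theorem lipschitzWith_one_of_dist_le_comparison {X Y : Type*} [PseudoMetricSpace X]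
    [PseudoMetricSpace Y] {f : X → Y} {φ : ℝ → ℝ} (hmono : MonotoneOn φ (Ici 0))
    (hiter : ∀ t, 0 ≤ t → Tendsto (fun p => φ^[p] t) atTop (𝓝 0))
    (hf : ∀ x y, dist (f x) (f y) ≤ φ (dist x y)) : LipschitzWith 1 f :=
  LipschitzWith.of_dist_le_mul fun x y => by
    simpa using (hf x y).trans
      (le_self_of_tendsto_iterate hmono dist_nonneg (hiter _ dist_nonneg))

section FiniteSup

variable {ι : Type*} [Finite ι] {φ : ι → ℝ → ℝ} {s : Set ℝ}

theorem monotoneOn_ciSup (hφ : ∀ r, MonotoneOn (φ r) s) : MonotoneOn (fun x => ⨆ r, φ r x) s :=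
  fun _ hx _ hy hxy => ciSup_mono (finite_range _).bddAbove fun r => hφ r hx hy hxy

theorem mapsTo_ciSup_Ici [Nonempty ι] (hφ : ∀ r, MapsTo (φ r) s (Ici 0)) :
    MapsTo (fun x => ⨆ r, φ r x) s (Ici 0) := fun x hx =>
  show 0 ≤ ⨆ r, φ r x from
    le_ciSup_of_le (finite_range fun r => φ r x).bddAbove (Classical.arbitrary ι) (hφ _ hx)

end FiniteSup

section Compositions

variable {α : Type*} {g : ℕ → α → α} {s : Set α}

theorem mapsTo_fwdComp (hg : ∀ i, MapsTo (g i) s s) (k : ℕ) : MapsTo (fwdComp g k) s s := by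
  induction k with
  | zero => exact mapsTo_id s
  | succ k ih => exact (hg k).comp ih

theorem mapsTo_bwdComp (hg : ∀ i, MapsTo (g i) s s) (k : ℕ) : MapsTo (bwdComp g k) s s := by
  induction k with
  | zero => exact mapsTo_id s
  | succ k ih => exact ih.comp (hg k)

variable [Preorder α]

theorem monotoneOn_fwdComp (hmono : ∀ i, MonotoneOn (g i) s) (hg : ∀ i, MapsTo (g i) s s)
    (k : ℕ) : MonotoneOn (fwdComp g k) s := by
  induction k with
  | zero => exact monotone_id.monotoneOn s
  | succ k ih => exact (hmono k).comp ih (mapsTo_fwdComp hg k)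

theorem monotoneOn_bwdComp (hmono : ∀ i, MonotoneOn (g i) s) (hg : ∀ i, MapsTo (g i) s s)
    (k : ℕ) : MonotoneOn (bwdComp g k) s := by
  induction k with
  | zero => exact monotone_id.monotoneOn s
  | succ k ih => exact ih.comp (hmono k) (hg k)

end Compositions

section Trajectories

variable {α : Type*} {D : α → α → ℝ} {s : Set α} {g : ℕ → α → α} {ψ : ℕ → ℝ → ℝ}

theorem fwdComp_le_fwdComp (hD : ∀ a b, 0 ≤ D a b) (hψ : ∀ i, MonotoneOn (ψ i) (Ici 0))
    (hg : ∀ i, MapsTo (g i) s s)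
    (hstep : ∀ i, ∀ a ∈ s, ∀ b ∈ s, D (g i a) (g i b) ≤ ψ i (D a b))
    {a b : α} (ha : a ∈ s) (hb : b ∈ s) (k : ℕ) :
    D (fwdComp g k a) (fwdComp g k b) ≤ fwdComp ψ k (D a b) := by
  induction k with
  | zero => exact le_rfl
  | succ k ih =>
    calc D (g k (fwdComp g k a)) (g k (fwdComp g k b))
        ≤ ψ k (D (fwdComp g k a) (fwdComp g k b)) :=
          hstep k _ (mapsTo_fwdComp hg k ha) _ (mapsTo_fwdComp hg k hb)
      _ ≤ ψ k (fwdComp ψ k (D a b)) := hψ k (hD _ _) ((hD _ _).trans ih) ih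

theorem bwdComp_le_bwdComp (hD : ∀ a b, 0 ≤ D a b) (hψ : ∀ i, MonotoneOn (ψ i) (Ici 0))
    (hψ₀ : ∀ i, MapsTo (ψ i) (Ici 0) (Ici 0)) (hg : ∀ i, MapsTo (g i) s s)
    (hstep : ∀ i, ∀ a ∈ s, ∀ b ∈ s, D (g i a) (g i b) ≤ ψ i (D a b))
    {a b : α} (ha : a ∈ s) (hb : b ∈ s) (k : ℕ) :
    D (bwdComp g k a) (bwdComp g k b) ≤ bwdComp ψ k (D a b) := by
  induction k generalizing a b with
  | zero => exact le_rfl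
  | succ k ih =>
    calc D (bwdComp g k (g k a)) (bwdComp g k (g k b))
        ≤ bwdComp ψ k (D (g k a) (g k b)) := ih (hg k ha) (hg k hb)
      _ ≤ bwdComp ψ k (ψ k (D a b)) :=
          monotoneOn_bwdComp hψ hψ₀ k (hD _ _) (hψ₀ k (hD a b)) (hstep k a ha b hb)

end Trajectories

theorem tendsto_zero_of_le_of_monotoneOn {u : ℕ → ℝ} {c : ℕ → ℝ → ℝ} {d : ℝ}
    (hu : ∀ k, 0 ≤ u k) (hd : 0 ≤ d) (huc : ∀ k, u k ≤ c k d)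
    (hc : ∀ k, MonotoneOn (c k) (Ici 0))
    (hlim : ∀ t, 0 < t → Tendsto (fun k => c k t) atTop (𝓝 0)) :
    Tendsto u atTop (𝓝 0) := by
  have hd₁ : d ≤ d + 1 := by linarith
  exact squeeze_zero hu (fun k => (huc k).trans (hc k hd (hd.trans hd₁) hd₁))
    (hlim (d + 1) (by linarith))

theorem mapsTo_iUnion_image_nonempty_isCompact {X ι : Type*} [TopologicalSpace X] [Finite ι]
    [Nonempty ι] {g : ι → X → X} (hg : ∀ r, Continuous (g r)) :
    MapsTo (fun K => ⋃ r, g r '' K) {K | K.Nonempty ∧ IsCompact K}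
      {K | K.Nonempty ∧ IsCompact K} := fun _ ⟨hK, hKc⟩ =>
  ⟨nonempty_iUnion.2 ⟨Classical.arbitrary ι, hK.image _⟩,
    isCompact_iUnion fun r => hKc.image (hg r)⟩

section Hausdorff

variable {X ι : Type*} [PseudoMetricSpace X] {g : ι → X → X} {ψ : ℝ → ℝ} {A B : Set X}

theorem exists_mem_iUnion_image_dist_le (hψ : MonotoneOn ψ (Ici 0))
    (hg : ∀ r x y, dist (g r x) (g r y) ≤ ψ (dist x y))
    (hB : IsCompact B) (hBne : B.Nonempty) (hAB : hausdorffEDist A B ≠ ⊤) :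
    ∀ x ∈ ⋃ r, g r '' A, ∃ y ∈ ⋃ r, g r '' B, dist x y ≤ ψ (hausdorffDist A B) := by
  simp only [mem_iUnion, mem_image]
  rintro _ ⟨r, a, ha, rfl⟩
  obtain ⟨b, hb, hab⟩ := hB.exists_infDist_eq_dist hBne a
  have hab_le : dist a b ≤ hausdorffDist A B := hab ▸ infDist_le_hausdorffDist_of_mem ha hAB
  exact ⟨g r b, ⟨r, b, hb, rfl⟩,
    (hg r a b).trans (hψ dist_nonneg hausdorffDist_nonneg hab_le)⟩

theorem hausdorffDist_iUnion_image_le (hψ : MonotoneOn ψ (Ici 0))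
    (hψ₀ : MapsTo ψ (Ici 0) (Ici 0)) (hg : ∀ r x y, dist (g r x) (g r y) ≤ ψ (dist x y))
    (hA : IsCompact A) (hAne : A.Nonempty) (hB : IsCompact B) (hBne : B.Nonempty) :
    hausdorffDist (⋃ r, g r '' A) (⋃ r, g r '' B) ≤ ψ (hausdorffDist A B) := by
  have hAB : hausdorffEDist A B ≠ ⊤ :=
    hausdorffEDist_ne_top_of_nonempty_of_bounded hAne hBne hA.isBounded hB.isBounded
  refine hausdorffDist_le_of_mem_dist (hψ₀ hausdorffDist_nonneg)
    (exists_mem_iUnion_image_dist_le hψ hg hB hBne hAB) fun x hx => ?_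
  obtain ⟨y, hy, hxy⟩ := exists_mem_iUnion_image_dist_le hψ hg hA hAne
    (hausdorffEDist_comm (s := A) ▸ hAB) x hx
  exact ⟨y, hy, hausdorffDist_comm (s := A) ▸ hxy⟩

end Hausdorff

/-- **asymptotic similarity of SFS trajectories.** Let
`F i (A) = ⋃_{r < n i} f i r '' A` be the set maps of a sequence of function systems whose
maps `f i r` are `φ i r`-contractions for comparison functions `φ i r`, and let
`φmax i = max_r φ i r` be the comparison function of `F i`. If for every `t > 0` the
compositions of the `φmax i` (in the order matching the trajectory) tend to `0`, then the
forward SFS trajectories of any two nonempty compact sets are asymptotically similar in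
the Hausdorff metric, and likewise the backward SFS trajectories. -/
theorem SFS_trajectories_asymptotically_similar {X : Type*} [MetricSpace X]
    (n : ℕ → ℕ) (hn : ∀ i, 0 < n i)
    (f : (i : ℕ) → Fin (n i) → X → X)
    (φ : (i : ℕ) → Fin (n i) → ℝ → ℝ)
    (hmap : ∀ i r, ∀ t : ℝ, 0 ≤ t → 0 ≤ φ i r t)
    (hmono : ∀ i r, ∀ s t : ℝ, 0 ≤ s → s ≤ t → φ i r s ≤ φ i r t)
    (hiter : ∀ i r, ∀ t : ℝ, 0 ≤ t → Tendsto (fun p => (φ i r)^[p] t) atTop (nhds 0))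
    (hcontr : ∀ i r, ∀ x y : X, dist (f i r x) (f i r y) ≤ φ i r (dist x y))
    (φmax : ℕ → ℝ → ℝ)
    (hφmax : ∀ i t, φmax i t = ⨆ r : Fin (n i), φ i r t)
    (F : ℕ → Set X → Set X)
    (hF : ∀ i A, F i A = ⋃ r : Fin (n i), f i r '' A)
    (hfwd : ∀ t : ℝ, 0 < t → Tendsto (fun k => fwdComp φmax k t) atTop (nhds 0))
    (hbwd : ∀ t : ℝ, 0 < t → Tendsto (fun k => bwdComp φmax k t) atTop (nhds 0)) :
    ∀ A B : Set X, A.Nonempty → IsCompact A → B.Nonempty → IsCompact B →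
      Tendsto (fun k => Metric.hausdorffDist (fwdComp F k A) (fwdComp F k B))
        atTop (nhds 0) ∧
      Tendsto (fun k => Metric.hausdorffDist (bwdComp F k A) (bwdComp F k B))
        atTop (nhds 0) := by
  intro A B hAne hA hBne hB
  obtain rfl : φmax = fun i t => ⨆ r, φ i r t := funext₂ hφmax
  obtain rfl : F = fun i A => ⋃ r, f i r '' A := funext₂ hF
  have (i : ℕ) : Nonempty (Fin (n i)) := ⟨⟨0, hn i⟩⟩
  have hφ_mono (i r) : MonotoneOn (φ i r) (Ici 0) := fun s hs t _ => hmono i r s t hs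
  have hφmax_mono (i : ℕ) : MonotoneOn (fun t => ⨆ r, φ i r t) (Ici 0) :=
    monotoneOn_ciSup (hφ_mono i)
  have hφmax₀ (i : ℕ) : MapsTo (fun t => ⨆ r, φ i r t) (Ici 0) (Ici 0) :=
    mapsTo_ciSup_Ici fun r t => hmap i r t
  have hf_le (i r) (x y : X) : dist (f i r x) (f i r y) ≤ ⨆ r, φ i r (dist x y) :=
    (hcontr i r x y).trans (le_ciSup (finite_range fun r => φ i r (dist x y)).bddAbove r)
  have hF_maps (i : ℕ) := mapsTo_iUnion_image_nonempty_isCompact fun r =>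
    (lipschitzWith_one_of_dist_le_comparison (hφ_mono i r) (hiter i r) (hcontr i r)).continuous
  have hstep (i : ℕ) :
      ∀ K ∈ {K : Set X | K.Nonempty ∧ IsCompact K}, ∀ L ∈ {K | K.Nonempty ∧ IsCompact K},
      hausdorffDist (⋃ r, f i r '' K) (⋃ r, f i r '' L) ≤ ⨆ r, φ i r (hausdorffDist K L) :=
    fun K ⟨hK, hKc⟩ L ⟨hL, hLc⟩ =>
      hausdorffDist_iUnion_image_le (hφmax_mono i) (hφmax₀ i) (hf_le i) hKc hK hLc hL
  have hD : ∀ K L : Set X, 0 ≤ hausdorffDist K L := fun _ _ => hausdorffDist_nonneg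
  exact ⟨tendsto_zero_of_le_of_monotoneOn (fun _ => hD _ _) (hD A B)
      (fwdComp_le_fwdComp hD hφmax_mono hF_maps hstep ⟨hAne, hA⟩ ⟨hBne, hB⟩)
      (monotoneOn_fwdComp hφmax_mono hφmax₀) hfwd,
    tendsto_zero_of_le_of_monotoneOn (fun _ => hD _ _) (hD A B)
      (bwdComp_le_bwdComp hD hφmax_mono hφmax₀ hF_maps hstep ⟨hAne, hA⟩ ⟨hBne, hB⟩)
      (monotoneOn_bwdComp hφmax_mono hφmax₀) hbwd⟩
end

section
/- Let (X, d) be a complete metric space and let {T_i : X → X}_{i∈ℕ} be a sequence of maps, each T_i a φ_i-contraction for a comparison function φ_i with φ_i(t) < t for t > 0, such that sup_{i≥1} d(T_i(x₀), x₀) < ∞ for some x₀ ∈ X and Σ_{k=1}^∞ φ₁∘φ₂∘⋯∘φ_k(t) < ∞ for every t > 0. Then the sequence {Ψ_k(x₀)}, where Ψ_k(x₀) = T₁∘T₂∘⋯∘T_k(x₀), is a Cauchy sequence in X, with the explicit estimate d(Ψ_m(x₀), Ψ_k(x₀)) ≤ Σ_{j=k}^{m−1} φ₁∘φ₂∘⋯∘φ_j(M)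 for all m > k ≥ 1, where M = sup_{i≥1} d(T_i(x₀), x₀). -/
open Filter Set Topology

lemma bwd_nonneg (φ : ℕ → ℝ → ℝ) (hmap : ∀ i, ∀ t : ℝ, 0 ≤ t → 0 ≤ φ i t) :
    ∀ k, ∀ t : ℝ, 0 ≤ t → 0 ≤ bwdComp φ k t := by
  intro k
  induction k with
  | zero => intro t ht; simpa [bwdComp] using ht
  | succ k ih => intro t ht; exact ih _ (hmap k t ht)

lemma bwd_mono (φ : ℕ → ℝ → ℝ) (hmap : ∀ i, ∀ t : ℝ, 0 ≤ t → 0 ≤ φ i t)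
    (hmono : ∀ i, ∀ s t : ℝ, 0 ≤ s → s ≤ t → φ i s ≤ φ i t) :
    ∀ k, ∀ s t : ℝ, 0 ≤ s → s ≤ t → bwdComp φ k s ≤ bwdComp φ k t := by
  intro k
  induction k with
  | zero => intro s t _ h; simpa [bwdComp] using h
  | succ k ih =>
    intro s t hs h
    exact ih _ _ (hmap k s hs) (hmono k s t hs h)

lemma phi_zero (φ : ℕ → ℝ → ℝ) (hmap : ∀ i, ∀ t : ℝ, 0 ≤ t → 0 ≤ φ i t)
    (hmono : ∀ i, ∀ s t : ℝ, 0 ≤ s → s ≤ t → φ i s ≤ φ i t)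
    (hlt : ∀ i, ∀ t : ℝ, 0 < t → φ i t < t) (i : ℕ) : φ i 0 = 0 := by
  rcases lt_or_eq_of_le (hmap i 0 le_rfl) with h | h
  · have h1 := hmono i 0 (φ i 0) le_rfl (le_of_lt h)
    have h2 := hlt i (φ i 0) h
    linarith
  · exact h.symm

lemma bwd_zero (φ : ℕ → ℝ → ℝ) (hmap : ∀ i, ∀ t : ℝ, 0 ≤ t → 0 ≤ φ i t)
    (hmono : ∀ i, ∀ s t : ℝ, 0 ≤ s → s ≤ t → φ i s ≤ φ i t)
    (hlt : ∀ i, ∀ t : ℝ, 0 < t → φ i t < t) : ∀ k, bwdComp φ k 0 = 0 := by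
  intro k
  induction k with
  | zero => rfl
  | succ k ih => simp [bwdComp, phi_zero φ hmap hmono hlt k, ih]

/-- Under the hypotheses of the backward-trajectory convergence
theorem, the backward trajectory `Ψ_k(x₀) = T₁∘⋯∘T_k (x₀)` is a Cauchy sequence, with
the explicit estimate `d(Ψ_m(x₀), Ψ_k(x₀)) ≤ ∑_{j=k}^{m-1} φ₁∘⋯∘φ_j (M)` for
`m > k ≥ 1`, where `M = sup_i d(T i x₀, x₀)`. -/
theorem backward_trajectories_cauchy {X : Type*} [MetricSpace X] [CompleteSpace X]
    (T : ℕ → X → X) (φ : ℕ → ℝ → ℝ)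
    (hmap : ∀ i, ∀ t : ℝ, 0 ≤ t → 0 ≤ φ i t)
    (hmono : ∀ i, ∀ s t : ℝ, 0 ≤ s → s ≤ t → φ i s ≤ φ i t)
    (hiter : ∀ i, ∀ t : ℝ, 0 ≤ t → Tendsto (fun p => (φ i)^[p] t) atTop (nhds 0))
    (hlt : ∀ i, ∀ t : ℝ, 0 < t → φ i t < t)
    (hcontr : ∀ i, ∀ x y : X, dist (T i x) (T i y) ≤ φ i (dist x y))
    (x₀ : X) (M : ℝ)
    (hM : M = ⨆ i, dist (T i x₀) x₀)
    (hMbdd : ∀ i, dist (T i x₀) x₀ ≤ M)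
    (hsum : ∀ t : ℝ, 0 < t → Summable (fun k => bwdComp φ (k + 1) t)) :
    CauchySeq (fun k => bwdComp T k x₀) ∧
      ∀ m k : ℕ, 1 ≤ k → k < m →
        dist (bwdComp T m x₀) (bwdComp T k x₀) ≤
          ∑ j ∈ Finset.Ico k m, bwdComp φ j M := by
  have hcontrK : ∀ k, ∀ a b : X, dist (bwdComp T k a) (bwdComp T k b) ≤
      bwdComp φ k (dist a b) := by
    intro k
    induction k with
    | zero => intro a b; simp [bwdComp]
    | succ k ih =>
      intro a b
      calc dist (bwdComp T k (T k a)) (bwdComp T k (T k b))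
          ≤ bwdComp φ k (dist (T k a) (T k b)) := ih _ _
        _ ≤ bwdComp φ k (φ k (dist a b)) :=
            bwd_mono φ hmap hmono k _ _ dist_nonneg (hcontr k a b)
  have hMnn : 0 ≤ M := le_trans dist_nonneg (hMbdd 0)
  -- step estimate
  have hstep : ∀ k, dist (bwdComp T k x₀) (bwdComp T (k + 1) x₀) ≤ bwdComp φ k M := by
    intro k
    have h1 : dist (bwdComp T k x₀) (bwdComp T (k + 1) x₀) ≤
        bwdComp φ k (dist x₀ (T k x₀)) := hcontrK k x₀ (T k x₀)
    refine h1.trans (bwd_mono φ hmap hmono k _ _ dist_nonneg ?_)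
    rw [dist_comm]; exact hMbdd k
  have hsumM : Summable (fun k => bwdComp φ k M) := by
    rcases eq_or_lt_of_le hMnn with h | h
    · have : (fun k => bwdComp φ k M) = fun _ => (0 : ℝ) := by
        funext k; rw [← h, bwd_zero φ hmap hmono hlt k]
      rw [this]; exact summable_zero
    · exact (summable_nat_add_iff 1).mp (hsum M h)
  constructor
  · apply cauchySeq_of_dist_le_of_summable (fun k => bwdComp φ k M) hstep hsumM
  · intro m k hk hkm
    calc dist (bwdComp T m x₀) (bwdComp T k x₀)
        = dist (bwdComp T k x₀) (bwdComp T m x₀) := dist_comm _ _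
      _ ≤ ∑ j ∈ Finset.Ico k m, dist (bwdComp T j x₀) (bwdComp T (j + 1) x₀) :=
          by simpa using dist_le_Ico_sum_dist (fun j => bwdComp T j x₀) (le_of_lt hkm)
      _ ≤ ∑ j ∈ Finset.Ico k m, bwdComp φ j M :=
          Finset.sum_le_sum fun j _ => hstep j
end
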